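/- Suppose {q_n} is a sequence of positive reals with β = lim_{n→∞} n(1−q_n) ∈ ℝ, and {a_n} is a sequence with a_n ∈ {1,…,n} and lim_{n→∞} a_n/n = a ∈ [0,1]. Suppose {a_{t_n}} is a subsequence such that the laws of π(a_{t_n})/t_n under μ_{t_n, q_{t_n}} converge in distribution to a probability measure v. Then the cumulative distribution function F_v of v is absolutely continuous. -/

import Mathlib

/-! Left multiplication by an adjacent transposition changes the number of inversions by at most
one, so under `μ_{n,q}` the probabilities `P(π i = j)` for different `j` are within a factor
`min(q, q⁻¹)^n` of each other; as they sum to one, each is at most `1 / (n · min(q, q⁻¹)^n)`.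
When `n(1 - qₙ) → β` this factor stays above some `κ > 0`, so the law of `π(aₙ)/n` gives mass at
most `(2R + 1/n)/κ` to every ball of radius `R`. Testing against bump functions passes the bound
`2R/κ` to the weak limit `v`, whose distribution function is therefore `κ⁻¹`-Lipschitz. -/

open Filter Finset MeasureTheory

/-- Number of inversions of a permutation of `Fin n`. -/
def inversions (n : ℕ) (π : Equiv.Perm (Fin n)) : ℕ :=
  (Finset.univ.filter (fun p : Fin n × Fin n => p.1 < p.2 ∧ π p.2 < π p.1)).card

/-- The `(n,q)`-Mallows probability mass function on `S_n`. -/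
noncomputable def mallowsPMF (n : ℕ) (q : ℝ) (π : Equiv.Perm (Fin n)) : ℝ :=
  q ^ inversions n π / ∑ σ : Equiv.Perm (Fin n), q ^ inversions n σ

open Classical in
/-- The `(n,q)`-Mallows probability of an event `P` of permutations. -/
noncomputable def mallowsProb (n : ℕ) (q : ℝ) (P : Equiv.Perm (Fin n) → Prop) : ℝ :=
  ∑ π : Equiv.Perm (Fin n), if P π then mallowsPMF n q π else 0

/-- Expectation with respect to the `(n,q)`-Mallows measure. -/
noncomputable def mallowsExp (n : ℕ) (q : ℝ) (f : Equiv.Perm (Fin n) → ℝ) : ℝ :=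
  ∑ π : Equiv.Perm (Fin n), mallowsPMF n q π * f π

/-- Action of a permutation of `Fin n` on one-based indices `{1,…,n}`. -/
def permAct (n : ℕ) (π : Equiv.Perm (Fin n)) (i : ℕ) : ℕ :=
  if h : 1 ≤ i ∧ i ≤ n then ((π ⟨i - 1, by omega⟩ : Fin n) : ℕ) + 1 else i

/-- The limiting density `u(x,y,β)` from Starr's theorem. -/
noncomputable def mallowsU (x y β : ℝ) : ℝ :=
  if β = 0 then 1
  else (β / 2) * Real.sinh (β / 2) /
    (Real.exp (β / 4) * Real.cosh (β * (x - y) / 2)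
      - Real.exp (-β / 4) * Real.cosh (β * (x + y - 1) / 2)) ^ 2

/-- A function `F : ℝ → ℝ` is absolutely continuous: for every `ε > 0` there is `δ > 0`
such that every finite collection of pairwise disjoint open intervals of total length
less than `δ` has total `F`-variation less than `ε`. -/
def AbsolutelyContinuousFun (F : ℝ → ℝ) : Prop :=
  ∀ ε > (0 : ℝ), ∃ δ > (0 : ℝ), ∀ (m : ℕ) (c d : ℕ → ℝ),
    (∀ k < m, c k < d k) →
    (∀ k < m, ∀ l < m, k ≠ l → Set.Ioo (c k) (d k) ∩ Set.Ioo (c l) (d l) = ∅) →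
    (∑ k ∈ Finset.range m, (d k - c k)) < δ →
    (∑ k ∈ Finset.range m, |F (d k) - F (c k)|) < ε

lemma Fin.pow_mul_le_of_adjacent {n : ℕ} {r : ℝ} (hr0 : 0 ≤ r) (hr1 : r ≤ 1) {f : Fin n → ℝ}
    (hf0 : 0 ≤ f) (hf : ∀ j k : Fin n, (j : ℕ) + 1 = k → r * f j ≤ f k ∧ r * f k ≤ f j)
    (j k : Fin n) : r ^ n * f j ≤ f k := by
  have hchain : ∀ (d : ℕ) (j k : Fin n), (j : ℕ) + d = k →
      r ^ d * f j ≤ f k ∧ r ^ d * f k ≤ f j := by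
    intro d
    induction d with
    | zero =>
      intro j k h
      obtain rfl : j = k := Fin.ext h
      simp
    | succ d ih =>
      intro j k h
      set m : Fin n := ⟨j + d, by omega⟩
      obtain ⟨hjm, hmj⟩ := ih j m rfl
      obtain ⟨hmk, hkm⟩ := hf m k (by simp only [m]; omega)
      constructor
      · calc r ^ (d + 1) * f j = r * (r ^ d * f j) := by ring
          _ ≤ r * f m := by gcongr
          _ ≤ f k := hmk
      · calc r ^ (d + 1) * f k = r ^ d * (r * f k) := by ring
          _ ≤ r ^ d * f m := by gcongr
          _ ≤ f j := hmj
  have hpow (d : ℕ) (hd : d ≤ n) (x : Fin n) : r ^ n * f x ≤ r ^ d * f x :=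
    mul_le_mul_of_nonneg_right (pow_le_pow_of_le_one hr0 hr1 hd) (hf0 x)
  rcases le_total j k with h | h
  · exact (hpow _ (by omega) j).trans (hchain (k - j) j k (by omega)).1
  · exact (hpow _ (by omega) j).trans (hchain (j - k) k j (by omega)).2

section Inversions

variable {n : ℕ}

lemma Fin.eq_and_eq_of_swap_lt_swap {j k a b : Fin n} (hjk : (j : ℕ) + 1 = k) (hab : a < b)
    (hswap : Equiv.swap j k b < Equiv.swap j k a) : a = j ∧ b = k := by
  rw [Equiv.swap_apply_def, Equiv.swap_apply_def] at hswap
  simp only [Fin.ext_iff, Fin.lt_def] at *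
  split_ifs at hswap <;> omega

lemma inversions_swap_mul_le (σ : Equiv.Perm (Fin n)) {j k : Fin n} (hjk : (j : ℕ) + 1 = k) :
    inversions n (Equiv.swap j k * σ) ≤ inversions n σ + 1 := by
  unfold inversions
  refine (card_le_card_sdiff_add_card (t := univ.filter fun p : Fin n × Fin n =>
    p.1 < p.2 ∧ σ p.2 < σ p.1)).trans ?_
  rw [add_comm]
  gcongr
  -- a pair of positions becomes an inversion only if it carries the values `j < k`
  refine (card_le_card fun p hp => ?_).trans_eq (card_singleton (σ⁻¹ j, σ⁻¹ k))
  rw [Finset.mem_sdiff, Finset.mem_filter, Finset.mem_filter] at hp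
  obtain ⟨⟨-, hlt, hswap⟩, hnot⟩ := hp
  have hσ : σ p.1 < σ p.2 :=
    (not_lt.1 fun h => hnot ⟨mem_univ p, hlt, h⟩).lt_of_ne (σ.injective.ne hlt.ne)
  obtain ⟨h1, h2⟩ := Fin.eq_and_eq_of_swap_lt_swap hjk hσ hswap
  simp [← h1, ← h2]

lemma min_inv_mul_pow_inversions_le {q : ℝ} (hq : 0 < q) (σ : Equiv.Perm (Fin n)) {j k : Fin n}
    (hjk : (j : ℕ) + 1 = k) :
    min q q⁻¹ * q ^ inversions n σ ≤ q ^ inversions n (Equiv.swap j k * σ) := by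
  rcases le_total q 1 with hq1 | hq1
  · calc min q q⁻¹ * q ^ inversions n σ ≤ q ^ (inversions n σ + 1) := by
          rw [pow_succ']; gcongr; exact min_le_left _ _
      _ ≤ q ^ inversions n (Equiv.swap j k * σ) :=
          pow_le_pow_of_le_one hq.le hq1 (inversions_swap_mul_le σ hjk)
  · have h := inversions_swap_mul_le (Equiv.swap j k * σ) hjk
    rw [Equiv.swap_mul_self_mul] at h
    calc min q q⁻¹ * q ^ inversions n σ
        ≤ q⁻¹ * q ^ (inversions n (Equiv.swap j k * σ) + 1) := by
          gcongr
          exact min_le_right _ _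
      _ = q ^ inversions n (Equiv.swap j k * σ) := by
          rw [pow_succ', inv_mul_cancel_left₀ hq.ne']

end Inversions

section Mallows

variable {n : ℕ} {q : ℝ}

lemma sum_pow_inversions_pos (hq : 0 < q) : 0 < ∑ σ : Equiv.Perm (Fin n), q ^ inversions n σ :=
  sum_pos (fun σ _ => by positivity) univ_nonempty

lemma mallowsPMF_nonneg (hq : 0 < q) (σ : Equiv.Perm (Fin n)) : 0 ≤ mallowsPMF n q σ :=
  div_nonneg (by positivity) (sum_pow_inversions_pos hq).le

lemma mallowsProb_nonneg (hq : 0 < q) (P : Equiv.Perm (Fin n) → Prop) : 0 ≤ mallowsProb n q P :=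
  sum_nonneg fun σ _ => by split_ifs <;> simp [mallowsPMF_nonneg hq]

lemma mallowsExp_nonneg (hq : 0 < q) {f : Equiv.Perm (Fin n) → ℝ} (hf : 0 ≤ f) :
    0 ≤ mallowsExp n q f :=
  sum_nonneg fun π _ => mul_nonneg (mallowsPMF_nonneg hq π) (hf π)

lemma min_inv_mul_mallowsPMF_le (hq : 0 < q) (σ : Equiv.Perm (Fin n)) {j k : Fin n}
    (hjk : (j : ℕ) + 1 = k) :
    min q q⁻¹ * mallowsPMF n q σ ≤ mallowsPMF n q (Equiv.swap j k * σ) := by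
  have := sum_pow_inversions_pos (n := n) hq
  rw [mallowsPMF, mallowsPMF, ← mul_div_assoc]
  gcongr
  exact min_inv_mul_pow_inversions_le hq σ hjk

lemma min_inv_mul_mallowsProb_le (hq : 0 < q) {j k : Fin n} (hjk : (j : ℕ) + 1 = k)
    (i m : Fin n) :
    min q q⁻¹ * mallowsProb n q (fun π => π i = m)
      ≤ mallowsProb n q (fun π => π i = Equiv.swap j k m) := by
  rw [mallowsProb, mallowsProb, mul_sum]
  conv_rhs => rw [← Equiv.sum_comp (Equiv.mulLeft (Equiv.swap j k))]
  refine sum_le_sum fun σ _ => ?_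
  simp only [Equiv.coe_mulLeft, Equiv.Perm.mul_apply, EmbeddingLike.apply_eq_iff_eq]
  split_ifs
  · exact min_inv_mul_mallowsPMF_le hq σ hjk
  · simp

lemma mallowsExp_comp_eq_sum (i : Fin n) (h : Fin n → ℝ) :
    mallowsExp n q (fun π => h (π i)) = ∑ j, h j * mallowsProb n q (fun π => π i = j) := by
  simp only [mallowsExp, mallowsProb, mul_sum, mul_ite, mul_zero]
  rw [sum_comm]
  simp [mul_comm]

lemma sum_mallowsProb_apply_eq (hq : 0 < q) (i : Fin n) :
    ∑ j, mallowsProb n q (fun π => π i = j) = 1 := by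
  have := sum_pow_inversions_pos (n := n) hq
  have h := (mallowsExp_comp_eq_sum (q := q) i fun _ => 1).symm
  simp only [one_mul, mallowsExp, mul_one, mallowsPMF, ← sum_div] at h
  rwa [div_self this.ne'] at h

lemma mul_pow_mul_mallowsProb_le_one (hq : 0 < q) (i j : Fin n) :
    n * min q q⁻¹ ^ n * mallowsProb n q (fun π => π i = j) ≤ 1 := by
  have hr1 : min q q⁻¹ ≤ 1 := by
    rcases le_total q 1 with h | h
    · exact min_le_of_left_le h
    · exact min_le_of_right_le (inv_le_one_of_one_le₀ h)
  have hadj : ∀ j k : Fin n, (j : ℕ) + 1 = k →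
      min q q⁻¹ * mallowsProb n q (fun π => π i = j) ≤ mallowsProb n q (fun π => π i = k) ∧
      min q q⁻¹ * mallowsProb n q (fun π => π i = k) ≤ mallowsProb n q (fun π => π i = j) :=
    fun j k hjk => ⟨by simpa using min_inv_mul_mallowsProb_le hq hjk i j,
      by simpa using min_inv_mul_mallowsProb_le hq hjk i k⟩
  have hflat := Fin.pow_mul_le_of_adjacent (lt_min hq (inv_pos.2 hq)).le hr1
    (f := fun j => mallowsProb n q (fun π => π i = j)) (fun j => mallowsProb_nonneg hq _) hadj j
  calc n * min q q⁻¹ ^ n * mallowsProb n q (fun π => π i = j)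
      = ∑ _k : Fin n, min q q⁻¹ ^ n * mallowsProb n q (fun π => π i = j) := by
        simp [mul_assoc]
    _ ≤ ∑ k, mallowsProb n q (fun π => π i = k) := sum_le_sum fun k _ => hflat k
    _ = 1 := sum_mallowsProb_apply_eq hq i

lemma mul_pow_mul_mallowsExp_comp_le (hq : 0 < q) (i : Fin n) {h : Fin n → ℝ} (hh : 0 ≤ h) :
    n * min q q⁻¹ ^ n * mallowsExp n q (fun π => h (π i)) ≤ ∑ j, h j := by
  rw [mallowsExp_comp_eq_sum, mul_sum]
  refine sum_le_sum fun j _ => ?_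
  calc n * min q q⁻¹ ^ n * (h j * mallowsProb n q (fun π => π i = j))
      = h j * (n * min q q⁻¹ ^ n * mallowsProb n q (fun π => π i = j)) := by ring
    _ ≤ h j * 1 := by gcongr; exacts [hh j, mul_pow_mul_mallowsProb_le_one hq i j]
    _ = h j := mul_one _

end Mallows

lemma Int.card_le_two_mul_add_one {s : Finset ℤ} {y R : ℝ} (hR : 0 ≤ R)
    (hs : ∀ k ∈ s, |(k : ℝ) - y| ≤ R) : (#s : ℝ) ≤ 2 * R + 1 := by
  rcases s.eq_empty_or_nonempty with rfl | ⟨k, hk⟩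
  · simp only [card_empty, Nat.cast_zero]
    linarith
  have hsub : s ⊆ Icc ⌈y - R⌉ ⌊y + R⌋ := fun k hk => by
    obtain ⟨h1, h2⟩ := abs_le.1 (hs k hk)
    rw [mem_Icc, Int.ceil_le, Int.le_floor]
    constructor <;> linarith
  have hne : ⌈y - R⌉ ≤ ⌊y + R⌋ + 1 := by
    obtain ⟨h1, h2⟩ := mem_Icc.1 (hsub hk)
    omega
  have hcard : ((#s : ℤ) : ℝ) ≤ ((⌊y + R⌋ + 1 - ⌈y - R⌉ : ℤ) : ℝ) := by
    rw [← Int.card_Icc_of_le _ _ hne]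
    exact_mod_cast card_le_card hsub
  push_cast at hcard
  linarith [Int.floor_le (y + R), Int.le_ceil (y - R)]

lemma sum_le_of_le_indicator_closedBall {n : ℕ} (hn : 0 < n) {f : ℝ → ℝ} {x R : ℝ} (hR : 0 ≤ R)
    (hf : f ≤ (Metric.closedBall x R).indicator 1) :
    ∑ j : Fin n, f (((j : ℕ) + 1 : ℝ) / n) ≤ 2 * R * n + 1 := by
  classical
  have hn' : (0 : ℝ) < n := Nat.cast_pos.2 hn
  set s := univ.filter fun j : Fin n => ((j : ℕ) + 1 : ℝ) / n ∈ Metric.closedBall x R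
  have hinj : Function.Injective fun j : Fin n => ((j : ℕ) : ℤ) + 1 := fun j k h =>
    Fin.ext (by simpa using h)
  calc ∑ j : Fin n, f (((j : ℕ) + 1 : ℝ) / n)
      ≤ ∑ j : Fin n, (Metric.closedBall x R).indicator 1 (((j : ℕ) + 1 : ℝ) / n) :=
        sum_le_sum fun j _ => hf _
    _ = #(s.image fun j : Fin n => ((j : ℕ) : ℤ) + 1) := by
        rw [card_image_of_injective _ hinj]
        simp [s, Set.indicator_apply]
    _ ≤ 2 * (R * n) + 1 := by
        refine Int.card_le_two_mul_add_one (y := x * n) (by positivity) fun k hk => ?_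
        obtain ⟨j, hj, rfl⟩ := mem_image.1 hk
        have hj := Metric.mem_closedBall.1 (mem_filter.1 hj).2
        rw [Real.dist_eq] at hj
        have hscale : ((j : ℕ) + 1 : ℝ) - x * n = (((j : ℕ) + 1 : ℝ) / n - x) * n := by
          field_simp
        push_cast
        rw [hscale, abs_mul, abs_of_pos hn']
        gcongr
    _ = 2 * R * n + 1 := by ring

lemma pow_mul_mallowsExp_le_of_le_indicator_closedBall {n : ℕ} (hn : 0 < n) {q : ℝ} (hq : 0 < q)
    (i : Fin n) {f : ℝ → ℝ} (hf0 : 0 ≤ f) {x R : ℝ} (hR : 0 ≤ R)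
    (hf : f ≤ (Metric.closedBall x R).indicator 1) :
    min q q⁻¹ ^ n * mallowsExp n q (fun π => f (((π i : ℕ) + 1 : ℝ) / n)) ≤ 2 * R + 1 / n := by
  have hn' : (0 : ℝ) < n := Nat.cast_pos.2 hn
  have h := (mul_pow_mul_mallowsExp_comp_le hq i (h := fun j => f (((j : ℕ) + 1 : ℝ) / n))
    fun j => hf0 _).trans (sum_le_of_le_indicator_closedBall hn hR hf)
  rw [mul_assoc, ← le_div_iff₀' hn'] at h
  calc _ ≤ (2 * R * n + 1) / n := h
    _ = 2 * R + 1 / n := by field_simp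

lemma exists_pos_eventually_le_min_inv_pow {q : ℕ → ℝ} {β : ℝ}
    (hβ : Tendsto (fun n : ℕ => (n : ℝ) * (1 - q n)) atTop (nhds β)) :
    ∃ κ > 0, ∀ᶠ n in atTop, κ ≤ min (q n) (q n)⁻¹ ^ n := by
  have hpow : Tendsto (fun n => q n ^ n) atTop (nhds (Real.exp (-β))) := by
    have h : Tendsto (fun n : ℕ => (n : ℝ) * (q n - 1)) atTop (nhds (-β)) := by
      convert hβ.neg using 2 with n
      ring
    simpa using Real.tendsto_one_add_pow_exp_of_tendsto h
  have hinv : Tendsto (fun n => (q n)⁻¹ ^ n) atTop (nhds (Real.exp β)) := by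
    simpa [inv_pow, Real.exp_neg] using hpow.inv₀ (Real.exp_pos _).ne'
  have hm : 0 < min (Real.exp (-β)) (Real.exp β) := by positivity
  refine ⟨_, half_pos hm, ?_⟩
  filter_upwards [hpow.eventually_const_le ((half_lt_self hm).trans_le (min_le_left _ _)),
    hinv.eventually_const_le ((half_lt_self hm).trans_le (min_le_right _ _))] with n h1 h2
  rcases min_choice (q n) (q n)⁻¹ with h | h <;> rw [h] <;> assumption

lemma limit_le_of_le_indicator_closedBall {q : ℕ → ℝ} (hq : ∀ n, 0 < q n) {a : ℕ → ℕ}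
    (ha : ∀ n : ℕ, 1 ≤ n → 1 ≤ a n ∧ a n ≤ n) {t : ℕ → ℕ} (ht : Tendsto t atTop atTop)
    {κ : ℝ} (hκ0 : 0 < κ) (hκ : ∀ᶠ n in atTop, κ ≤ min (q n) (q n)⁻¹ ^ n)
    {f : ℝ → ℝ} (hf0 : 0 ≤ f) {x R : ℝ} (hR : 0 ≤ R)
    (hf : f ≤ (Metric.closedBall x R).indicator 1) {L : ℝ}
    (hL : Tendsto (fun m : ℕ =>
      mallowsExp (t m) (q (t m)) (fun π => f ((permAct (t m) π (a (t m)) : ℝ) / (t m))))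
      atTop (nhds L)) :
    L ≤ 2 * κ⁻¹ * R := by
  have hbound : ∀ᶠ m in atTop,
      κ * mallowsExp (t m) (q (t m)) (fun π => f ((permAct (t m) π (a (t m)) : ℝ) / (t m)))
        ≤ 2 * R + 1 / t m := by
    filter_upwards [ht.eventually hκ, ht.eventually_ge_atTop 1] with m hκm hm
    obtain ⟨h1, h2⟩ := ha _ hm
    have hact : ∀ π, (permAct (t m) π (a (t m)) : ℝ)
        = ((π ⟨a (t m) - 1, by omega⟩ : ℕ) + 1 : ℝ) := fun π => by
      simp [permAct, dif_pos (And.intro h1 h2)]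
    simp only [hact]
    calc _ ≤ min (q (t m)) (q (t m))⁻¹ ^ t m * mallowsExp (t m) (q (t m)) _ :=
          mul_le_mul_of_nonneg_right hκm (mallowsExp_nonneg (hq _) fun π => hf0 _)
      _ ≤ 2 * R + 1 / t m :=
          pow_mul_mallowsExp_le_of_le_indicator_closedBall hm (hq _) _ hf0 hR hf
  have hlim : Tendsto (fun m => 2 * R + 1 / (t m : ℝ)) atTop (nhds (2 * R)) := by
    simpa using tendsto_const_nhds.add ((tendsto_one_div_atTop_nhds_zero_nat (𝕜 := ℝ)).comp ht)
  have h := le_of_tendsto_of_tendsto (hL.const_mul κ) hlim hbound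
  rw [mul_comm 2, mul_assoc, ← div_eq_inv_mul, le_div_iff₀' hκ0]
  exact h

lemma measureReal_closedBall_le_of_integral_le {E : Type*} [NormedAddCommGroup E]
    [NormedSpace ℝ E] [HasContDiffBump E] [MeasurableSpace E] [BorelSpace E] {v : Measure E}
    [IsFiniteMeasure v] {x : E} {ρ L : ℝ} (hρ : 0 < ρ)
    (h : ∀ R > ρ, ∀ f : BoundedContinuousFunction E ℝ, 0 ≤ f →
      ⇑f ≤ (Metric.closedBall x R).indicator 1 → ∫ y, f y ∂v ≤ L * R) :
    v.real (Metric.closedBall x ρ) ≤ L * ρ := by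
  refine ge_of_tendsto (x := nhdsWithin ρ (Set.Ioi ρ))
    ((continuous_const_mul L).continuousWithinAt) ?_
  filter_upwards [self_mem_nhdsWithin] with R hR
  let φ : ContDiffBump x := ⟨ρ, R, hρ, hR⟩
  let f : BoundedContinuousFunction E ℝ :=
    .ofNormedAddCommGroup φ φ.continuous 1 fun y => by
      rw [Real.norm_eq_abs, abs_of_nonneg φ.nonneg]
      exact φ.le_one
  have hf0 : 0 ≤ f := fun y => φ.nonneg
  have hf : ⇑f ≤ (Metric.closedBall x R).indicator 1 := fun y => by
    by_cases hy : y ∈ Metric.closedBall x R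
    · simpa [Set.indicator_of_mem hy, f] using φ.le_one
    · rw [Set.indicator_of_notMem hy]
      exact (φ.zero_of_le_dist (not_le.1 hy).le).le
  have hφ : (Metric.closedBall x ρ).indicator 1 ≤ ⇑f := fun y => by
    by_cases hy : y ∈ Metric.closedBall x ρ
    · simp [Set.indicator_of_mem hy, f, φ.one_of_mem_closedBall hy]
    · simpa [Set.indicator_of_notMem hy] using hf0 y
  calc v.real (Metric.closedBall x ρ) = ∫ y, (Metric.closedBall x ρ).indicator 1 y ∂v :=
        (integral_indicator_one Metric.isClosed_closedBall.measurableSet).symm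
    _ ≤ ∫ y, f y ∂v :=
        integral_mono ((integrable_const 1).indicator Metric.isClosed_closedBall.measurableSet)
          (f.integrable v) hφ
    _ ≤ L * R := h R hR f hf0 hf

lemma lipschitzWith_measureReal_Iic {v : Measure ℝ} [IsFiniteMeasure v] {K : NNReal}
    (h : ∀ x, ∀ ρ > 0, v.real (Metric.closedBall x ρ) ≤ 2 * K * ρ) :
    LipschitzWith K fun y => v.real (Set.Iic y) := by
  refine LipschitzWith.of_le_add_mul K fun x y => ?_
  rcases le_or_gt x y with hxy | hyx
  · have := measureReal_mono (μ := v) (Set.Iic_subset_Iic.2 hxy)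
    nlinarith [dist_nonneg (x := x) (y := y), K.coe_nonneg]
  have hsplit : v.real (Set.Iic x) = v.real (Set.Iic y) + v.real (Set.Ioc y x) := by
    rw [← measureReal_union (Set.Iic_disjoint_Ioc le_rfl) measurableSet_Ioc,
      Set.Iic_union_Ioc_eq_Iic hyx.le]
  have hIcc : Set.Ioc y x ⊆ Metric.closedBall ((y + x) / 2) ((x - y) / 2) := by
    rw [Real.closedBall_eq_Icc]
    exact fun z hz => ⟨by linarith [hz.1], by linarith [hz.2]⟩
  have hball := h ((y + x) / 2) ((x - y) / 2) (by linarith)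
  rw [hsplit, Real.dist_eq, abs_of_pos (sub_pos.2 hyx)]
  linarith [measureReal_mono (μ := v) hIcc]

lemma LipschitzWith.absolutelyContinuousFun {F : ℝ → ℝ} {K : NNReal} (hF : LipschitzWith K F) :
    AbsolutelyContinuousFun F := by
  intro ε hε
  refine ⟨ε / (K + 1), by positivity, fun m c d hcd _ hsum => ?_⟩
  have hterm : ∀ k ∈ range m, |F (d k) - F (c k)| ≤ K * (d k - c k) := fun k hk => by
    have := hF.dist_le_mul (d k) (c k)
    rwa [Real.dist_eq, Real.dist_eq, abs_of_pos (sub_pos.2 (hcd k (mem_range.1 hk)))] at this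
  calc ∑ k ∈ range m, |F (d k) - F (c k)| ≤ K * ∑ k ∈ range m, (d k - c k) := by
        rw [mul_sum]; exact sum_le_sum hterm
    _ ≤ K * (ε / (K + 1)) := by gcongr
    _ < ε := by
        rw [mul_div_assoc', div_lt_iff₀ (by positivity)]
        linarith

theorem limit_cdf_absolutely_continuous_general
    (q : ℕ → ℝ) (hq : ∀ n, 0 < q n) (β : ℝ)
    (hβ : Tendsto (fun n : ℕ => (n : ℝ) * (1 - q n)) atTop (nhds β))
    (a : ℕ → ℕ) (ha : ∀ n : ℕ, 1 ≤ n → 1 ≤ a n ∧ a n ≤ n)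
    (t : ℕ → ℕ) (hmono : StrictMono t)
    (v : Measure ℝ) (hv : IsProbabilityMeasure v)
    (hconv : ∀ f : BoundedContinuousFunction ℝ ℝ,
      Tendsto (fun n : ℕ =>
          mallowsExp (t n) (q (t n))
            (fun π => f ((permAct (t n) π (a (t n)) : ℝ) / (t n))))
        atTop (nhds (∫ y, f y ∂v))) :
    AbsolutelyContinuousFun (fun y => (v (Set.Iic y)).toReal) := by
  obtain ⟨κ, hκ0, hκ⟩ := exists_pos_eventually_le_min_inv_pow hβ
  have hball : ∀ x, ∀ ρ > 0, v.real (Metric.closedBall x ρ) ≤ 2 * κ⁻¹ * ρ :=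
    fun x ρ hρ => measureReal_closedBall_le_of_integral_le hρ fun R hR f hf0 hf =>
      limit_le_of_le_indicator_closedBall hq ha hmono.tendsto_atTop hκ0 hκ hf0 (hρ.trans hR).le hf
        (hconv f)
  exact (lipschitzWith_measureReal_Iic (K := ⟨κ⁻¹, inv_nonneg.2 hκ0.le⟩) hball)
    |>.absolutelyContinuousFun

/-- **Lemma 3.10.** If `n(1-qₙ) → β`, `aₙ ∈ {1,…,n}` with `aₙ/n → a ∈ [0,1]`, and along a
subsequence `tₙ` the laws of `π(a_{tₙ})/tₙ` under `μ_{tₙ,q_{tₙ}}` converge in distribution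
to a probability measure `v`, then the distribution function of `v` is absolutely
continuous. -/
theorem limit_cdf_absolutely_continuous
    (q : ℕ → ℝ) (hq : ∀ n, 0 < q n) (β : ℝ)
    (hβ : Tendsto (fun n : ℕ => (n : ℝ) * (1 - q n)) atTop (nhds β))
    (a : ℕ → ℕ) (ha : ∀ n : ℕ, 1 ≤ n → 1 ≤ a n ∧ a n ≤ n)
    (av : ℝ) (hav : av ∈ Set.Icc (0 : ℝ) 1)
    (haa : Tendsto (fun n : ℕ => (a n : ℝ) / n) atTop (nhds av))
    (t : ℕ → ℕ) (hmono : StrictMono t)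
    (v : Measure ℝ) (hv : IsProbabilityMeasure v)
    (hconv : ∀ f : BoundedContinuousFunction ℝ ℝ,
      Tendsto (fun n : ℕ =>
          mallowsExp (t n) (q (t n))
            (fun π => f ((permAct (t n) π (a (t n)) : ℝ) / (t n))))
        atTop (nhds (∫ y, f y ∂v))) :
    AbsolutelyContinuousFun (fun y => (v (Set.Iic y)).toReal) :=
  limit_cdf_absolutely_continuous_general q hq β hβ a ha t hmono v hv hconv
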